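/- If two permutations π and τ of the same size have their left-to-right maxima in exactly the same positions, then the trees T(π) and T(τ) of iterated bubblesort preimages are isomorphic as rooted trees. -/

import Mathlib

/-- One pass of bubblesort on a list of naturals. -/
def bpass : List ℕ → List ℕ
  | [] => []
  | [a] => [a]
  | a :: b :: l => if b < a then b :: bpass (a :: l) else a :: bpass (b :: l)

/-- The identity permutation 1 2 ... n as a list. -/
def idList (n : ℕ) : List ℕ := List.map (· + 1) (List.range n)

/-- `l` is (the word of) a permutation of size `n`, i.e. a rearrangement of 1,...,n. -/
def IsPermList (n : ℕ) (l : List ℕ) : Prop := l.Perm (idList n)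

/-- position `j` of `l` holds a left-to-right maximum. -/
def IsLTRMax (l : List ℕ) (j : ℕ) : Prop :=
  j < l.length ∧ ∀ i < j, l.getD i 0 < l.getD j 0

instance (l : List ℕ) (j : ℕ) : Decidable (IsLTRMax l j) := by
  unfold IsLTRMax; infer_instance

/-- the number of left-to-right maxima of `l`. -/
def ltrCount (l : List ℕ) : ℕ :=
  ((List.range l.length).filter fun j => decide (IsLTRMax l j)).length

/-- the length of the longest suffix of `l` consisting of left-to-right maxima. -/
def suffLen (l : List ℕ) : ℕ :=
  ((List.range l.length).takeWhile fun j => decide (IsLTRMax l (l.length - 1 - j))).length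

/-- `σ` is a node of the tree `T(π)` of iterated bubblesort preimages. -/
def IsNode (n : ℕ) (π σ : List ℕ) : Prop :=
  IsPermList n σ ∧ ∃ j, bpass^[j] σ = π

/-- `σ` is a node of `T(π)` at height `j` (j passes needed to reach π, and no fewer). -/
def IsNodeAt (n : ℕ) (π σ : List ℕ) (j : ℕ) : Prop :=
  IsPermList n σ ∧ bpass^[j] σ = π ∧ ∀ i < j, bpass^[i] σ ≠ π

/-- `τ` is a leaf: it has no child, i.e. no bubblesort preimage other than itself. -/
def IsLeafNode (n : ℕ) (τ : List ℕ) : Prop :=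
  ¬ ∃ ρ, IsPermList n ρ ∧ ρ ≠ τ ∧ bpass ρ = τ

/-- `T(π)` and `T(τ)` are isomorphic as rooted trees: there is a bijection between
their node sets sending root to root and commuting with the parent map `bpass`. -/
def TreeIso (n : ℕ) (π τ : List ℕ) : Prop :=
  ∃ φ : List ℕ → List ℕ,
    (∀ σ, IsNode n π σ → IsNode n τ (φ σ)) ∧
    (∀ σ σ', IsNode n π σ → IsNode n π σ' → φ σ = φ σ' → σ = σ') ∧
    (∀ ρ, IsNode n τ ρ → ∃ σ, IsNode n π σ ∧ φ σ = ρ) ∧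
    φ π = τ ∧
    (∀ σ, IsNode n π σ → σ ≠ π → φ (bpass σ) = bpass (φ σ))

/-!
Cut a permutation `ρ` into blocks, each a left-to-right maximum followed by the smaller entries
up to the next one. One pass of bubblesort moves the head of every block to its end, and these
block ends are left-to-right maxima of `bpass ρ`. So if `σ` and `σ'` have their left-to-right
maxima in the same positions, cutting `σ'` into pieces of the same lengths and rotating each piece
back turns the preimages of `σ` into preimages of `σ'`, bijectively and preserving the positions
of left-to-right maxima. Applying this transfer recursively from the roots, `π ↦ τ`, gives the
isomorphism.
-/

theorem bpass_cons_cons (a b : ℕ) (t : List ℕ) :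
    bpass (a :: b :: t) = min a b :: bpass (max a b :: t) := by
  rw [bpass]
  split_ifs with hba
  · rw [min_eq_right hba.le, max_eq_left hba.le]
  · rw [min_eq_left (not_lt.1 hba), max_eq_right (not_lt.1 hba)]

theorem bpass_perm : ∀ l : List ℕ, (bpass l).Perm l
  | [] => by rw [bpass]
  | [a] => by rw [bpass]
  | a :: b :: t => by
    rw [bpass_cons_cons]
    refine ((bpass_perm (max a b :: t)).cons _).trans ?_
    rcases le_total a b with h | h
    · rw [min_eq_left h, max_eq_right h]
    · rw [min_eq_right h, max_eq_left h]
      exact .swap a b t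
  termination_by l => l.length

theorem iterate_bpass_perm (k : ℕ) (l : List ℕ) : (bpass^[k] l).Perm l := by
  induction k with
  | zero => rfl
  | succ k ih => exact (Function.iterate_succ_apply' bpass k l ▸ bpass_perm _).trans ih

theorem exists_bpass_cons_eq_append_max (a : ℕ) (t : List ℕ) :
    ∃ u m, bpass (a :: t) = u ++ [m] ∧ u.length = t.length ∧ ∀ x ∈ a :: t, x ≤ m := by
  induction t generalizing a with
  | nil => exact ⟨[], a, by rw [bpass]; rfl, rfl, by simp⟩
  | cons b t ih =>
    obtain ⟨u, m, he, hl, hm⟩ := ih (max a b)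
    have hmax : max a b ≤ m := hm _ List.mem_cons_self
    refine ⟨min a b :: u, m, by rw [bpass_cons_cons, he]; rfl, by simp [hl], ?_⟩
    simp only [List.mem_cons] at hm ⊢
    rintro x (rfl | rfl | hx)
    · exact (le_max_left _ _).trans hmax
    · exact (le_max_right _ _).trans hmax
    · exact hm x (Or.inr hx)

theorem bpass_cons_append_singleton (M : ℕ) (a : ℕ) (t : List ℕ) (h : ∀ x ∈ a :: t, x ≤ M) :
    bpass (a :: t ++ [M]) = bpass (a :: t) ++ [M] := by
  induction t generalizing a with
  | nil =>
    have haM : a ≤ M := h a List.mem_cons_self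
    simp [bpass_cons_cons, min_eq_left haM, max_eq_right haM, bpass]
  | cons b t ih =>
    simp only [List.mem_cons, forall_eq_or_imp] at h
    rw [List.cons_append, List.cons_append, bpass_cons_cons, bpass_cons_cons, ← List.cons_append,
      ih _ (List.forall_mem_cons.2 ⟨max_le h.1 h.2.1, h.2.2⟩), List.cons_append]

theorem bpass_append_singleton (M : ℕ) : ∀ u : List ℕ, (∀ x ∈ u, x ≤ M) →
    bpass (u ++ [M]) = bpass u ++ [M]
  | [], _ => by simp [bpass]
  | a :: t, h => bpass_cons_append_singleton M a t h

theorem iterate_bpass_append_singleton (M : ℕ) (k : ℕ) (u : List ℕ) (h : ∀ x ∈ u, x ≤ M) :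
    bpass^[k] (u ++ [M]) = bpass^[k] u ++ [M] := by
  induction k generalizing u with
  | zero => rfl
  | succ k ih =>
    rw [Function.iterate_succ_apply, Function.iterate_succ_apply, bpass_append_singleton M u h,
      ih _ fun x hx => h x ((bpass_perm u).subset hx)]

theorem pairwise_iterate_bpass (k : ℕ) (l : List ℕ) (hk : l.length ≤ k) :
    (bpass^[k] l).Pairwise (· ≤ ·) := by
  induction k generalizing l with
  | zero => simp [List.length_eq_zero_iff.1 (Nat.le_zero.1 hk)]
  | succ k ih =>
    rcases l with _ | ⟨a, t⟩
    · rw [Function.iterate_fixed (by rw [bpass])]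
      exact .nil
    · obtain ⟨u, m, he, hl, hm⟩ := exists_bpass_cons_eq_append_max a t
      have hum : ∀ x ∈ u, x ≤ m := fun x hx =>
        hm x ((bpass_perm _).subset (he ▸ List.mem_append_left _ hx))
      rw [Function.iterate_succ_apply, he, iterate_bpass_append_singleton m k u hum,
        List.pairwise_append]
      refine ⟨ih u (by rw [List.length_cons] at hk; omega), List.pairwise_singleton _ m, ?_⟩
      simpa using fun x hx => hum x ((iterate_bpass_perm k u).subset hx)

theorem bpass_eq_self_of_pairwise : ∀ l : List ℕ, l.Pairwise (· ≤ ·) → bpass l = l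
  | [], _ => by rw [bpass]
  | [a], _ => by rw [bpass]
  | a :: b :: t, h => by
    have hab : a ≤ b := List.rel_of_pairwise_cons h List.mem_cons_self
    rw [bpass_cons_cons, min_eq_left hab, max_eq_right hab,
      bpass_eq_self_of_pairwise (b :: t) h.of_cons]

theorem pairwise_of_iterate_bpass_eq_self {k : ℕ} {l : List ℕ} (h : bpass^[k + 1] l = l) :
    l.Pairwise (· ≤ ·) := by
  have := pairwise_iterate_bpass ((k + 1) * l.length) l (Nat.le_mul_of_pos_left _ k.succ_pos)
  rwa [Function.iterate_mul, Function.iterate_fixed h] at this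

theorem IsPermList.length_eq {n : ℕ} {l : List ℕ} (h : IsPermList n l) : l.length = n := by
  rw [List.Perm.length_eq h, idList, List.length_map, List.length_range]

theorem IsPermList.nodup {n : ℕ} {l : List ℕ} (h : IsPermList n l) : l.Nodup :=
  (List.Perm.nodup_iff h).2 (List.nodup_range.map fun _ _ => Nat.succ_inj.1)

theorem isLTRMax_zero {l : List ℕ} (hl : l ≠ []) : IsLTRMax l 0 :=
  ⟨List.length_pos_iff.2 hl, fun _ hi => absurd hi (Nat.not_lt_zero _)⟩

theorem forall_isLTRMax_iff_pairwise_lt {l : List ℕ} :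
    (∀ j < l.length, IsLTRMax l j) ↔ l.Pairwise (· < ·) := by
  rw [List.pairwise_iff_getElem]
  constructor
  · intro h i j hi hj hij
    simpa [List.getD_eq_getElem, hi, hj] using (h j hj).2 i hij
  · intro h j hj
    refine ⟨hj, fun i hij => ?_⟩
    simpa [List.getD_eq_getElem, hj, hij.trans hj] using h i j (hij.trans hj) hj hij

theorem pairwise_lt_of_isLTRMax_iff {l l' : List ℕ} (hlen : l.length = l'.length)
    (h : ∀ k, IsLTRMax l k ↔ IsLTRMax l' k) (h' : l'.Pairwise (· < ·)) : l.Pairwise (· < ·) :=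
  forall_isLTRMax_iff_pairwise_lt.1 fun j hj =>
    (h j).2 (forall_isLTRMax_iff_pairwise_lt.2 h' j (hlen ▸ hj))

theorem isLTRMax_append_iff (u v : List ℕ) (j : ℕ) :
    IsLTRMax (u ++ v) (u.length + j) ↔ IsLTRMax v j ∧ ∀ x ∈ u, x < v.getD j 0 := by
  have hget : ∀ i, (u ++ v).getD (u.length + i) 0 = v.getD i 0 := fun i => by
    rw [List.getD_append_right _ _ _ _ (Nat.le_add_right _ _), Nat.add_sub_cancel_left]
  simp only [IsLTRMax, List.length_append, hget, add_lt_add_iff_left]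
  constructor
  · rintro ⟨hj, hmax⟩
    refine ⟨⟨hj, fun i hi => ?_⟩, fun x hx => ?_⟩
    · have := hmax (u.length + i) (by omega)
      rwa [hget] at this
    · obtain ⟨i, hi, rfl⟩ := List.getElem_of_mem hx
      have := hmax i (by omega)
      rwa [List.getD_append _ _ _ _ hi, List.getD_eq_getElem _ _ hi] at this
  · rintro ⟨⟨hj, hmax⟩, hu⟩
    refine ⟨hj, fun i hi => ?_⟩
    rcases lt_or_ge i u.length with hiu | hiu
    · rw [List.getD_append _ _ _ _ hiu, List.getD_eq_getElem _ _ hiu]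
      exact hu _ (List.getElem_mem hiu)
    · obtain ⟨i, rfl⟩ := Nat.exists_eq_add_of_le hiu
      rw [hget]
      exact hmax i (by omega)

def recordBlocks : List ℕ → List (ℕ × List ℕ)
  | [] => []
  | a :: l => (a, l.takeWhile (· < a)) :: recordBlocks (l.dropWhile (· < a))
  termination_by l => l.length
  decreasing_by exact Nat.lt_succ_of_le (List.length_dropWhile_le _ _)

def joinBlocks : List (ℕ × List ℕ) → List ℕ
  | [] => []
  | (c, B) :: D => c :: (B ++ joinBlocks D)

def joinRotated : List (ℕ × List ℕ) → List ℕ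
  | [] => []
  | (c, B) :: D => B ++ c :: joinRotated D

def IsRecordBlocks : List ℕ → List (ℕ × List ℕ) → Prop
  | _, [] => True
  | u, (c, B) :: D => (∀ x ∈ u, x < c) ∧ (∀ x ∈ B, x < c) ∧ IsRecordBlocks (u ++ c :: B) D

def tailLengths (D : List (ℕ × List ℕ)) : List ℕ := D.map fun p => p.2.length

theorem tailLengths_cons (c : ℕ) (B : List ℕ) (D : List (ℕ × List ℕ)) :
    tailLengths ((c, B) :: D) = B.length :: tailLengths D := rfl

/-- Each piece `s.take (b + 1)` is read as a rotated block `B ++ [c]`. -/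
def cutBlocks : List ℕ → List ℕ → List (ℕ × List ℕ)
  | [], _ => []
  | b :: L, s => (s.getD b 0, s.take b) :: cutBlocks L (s.drop (b + 1))

def blockStarts : List ℕ → List ℕ
  | [] => []
  | b :: L => 0 :: (blockStarts L).map (· + (b + 1))

def blockEnds : List ℕ → List ℕ
  | [] => []
  | b :: L => b :: (blockEnds L).map (· + (b + 1))

theorem isRecordBlocks_congr : ∀ {u u' : List ℕ} {D : List (ℕ × List ℕ)},
    (∀ x, x ∈ u ↔ x ∈ u') → (IsRecordBlocks u D ↔ IsRecordBlocks u' D)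
  | _, _, [], _ => Iff.rfl
  | u, u', (c, B) :: D, h => by
    have hD : IsRecordBlocks (u ++ c :: B) D ↔ IsRecordBlocks (u' ++ c :: B) D :=
      isRecordBlocks_congr fun x => by simp only [List.mem_append, h]
    simp only [IsRecordBlocks, h, hD]

theorem joinBlocks_recordBlocks : ∀ l : List ℕ, joinBlocks (recordBlocks l) = l
  | [] => by rw [recordBlocks, joinBlocks]
  | a :: l => by
    rw [recordBlocks, joinBlocks, joinBlocks_recordBlocks, List.takeWhile_append_dropWhile]
  termination_by l => l.length
  decreasing_by exact Nat.lt_succ_of_le (List.length_dropWhile_le _ _)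

theorem isRecordBlocks_recordBlocks : ∀ {l u : List ℕ}, l.Nodup →
    (∀ x ∈ u, ∀ b ∈ l.head?, x < b) → IsRecordBlocks u (recordBlocks l)
  | [], _, _, _ => by rw [recordBlocks]; trivial
  | a :: l, u, hnd, hu => by
    rw [recordBlocks]
    have hB : ∀ x ∈ l.takeWhile (· < a), x < a := fun x hx => by
      simpa using List.mem_takeWhile_imp hx
    refine ⟨fun x hx => hu x hx a rfl, hB,
      isRecordBlocks_recordBlocks ((List.nodup_cons.1 hnd).2.sublist (List.dropWhile_sublist _)) ?_⟩
    intro x hx b hb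
    -- the next head is not `< a`, and differs from `a` since `a :: l` has no repetitions
    have hab : a < b := by
      have hba := List.head?_dropWhile_not (· < a) l
      rw [Option.mem_def.1 hb] at hba
      have hbl : b ∈ l := (List.dropWhile_sublist _).subset (List.mem_of_mem_head? hb)
      exact lt_of_le_of_ne (by simpa using hba) fun h => (List.nodup_cons.1 hnd).1 (h ▸ hbl)
    simp only [List.mem_append, List.mem_cons] at hx
    rcases hx with hx | rfl | hx
    · exact (hu x hx a rfl).trans hab
    · exact hab
    · exact (hB x hx).trans hab
  termination_by l => l.length
  decreasing_by exact Nat.lt_succ_of_le (List.length_dropWhile_le _ _)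

theorem recordBlocks_joinBlocks : ∀ {u : List ℕ} {D : List (ℕ × List ℕ)}, IsRecordBlocks u D →
    recordBlocks (joinBlocks D) = D
  | _, [], _ => by rw [joinBlocks, recordBlocks]
  | u, (c, B) :: D, ⟨_, hB, hD⟩ => by
    have hB' : ∀ x ∈ B, decide (x < c) = true := by simpa using hB
    obtain ⟨htake, hdrop⟩ : (joinBlocks D).takeWhile (· < c) = [] ∧
        (joinBlocks D).dropWhile (· < c) = joinBlocks D := by
      rcases D with _ | ⟨⟨c', B'⟩, D⟩
      · exact ⟨rfl, rfl⟩
      · have hcc' : ¬ c' < c := not_lt.2 (hD.1 c (by simp)).le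
        simp [joinBlocks, hcc']
    rw [joinBlocks, recordBlocks, List.takeWhile_append_of_pos hB',
      List.dropWhile_append_of_pos hB', htake, hdrop, List.append_nil, recordBlocks_joinBlocks hD]

theorem bpass_cons_append {c : ℕ} : ∀ {B : List ℕ} (t : List ℕ), (∀ x ∈ B, x ≤ c) →
    bpass (c :: (B ++ t)) = B ++ bpass (c :: t)
  | [], _, _ => rfl
  | b :: B, t, h => by
    have hbc : b ≤ c := h b List.mem_cons_self
    rw [List.cons_append, bpass_cons_cons, min_eq_right hbc, max_eq_left hbc,
      bpass_cons_append t fun x hx => h x (List.mem_cons_of_mem b hx), List.cons_append]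

theorem bpass_joinBlocks : ∀ {u : List ℕ} {D : List (ℕ × List ℕ)}, IsRecordBlocks u D →
    bpass (joinBlocks D) = joinRotated D
  | _, [], _ => by rw [joinBlocks, bpass, joinRotated]
  | u, (c, B) :: D, ⟨_, hB, hD⟩ => by
    rw [joinBlocks, joinRotated, bpass_cons_append _ fun x hx => (hB x hx).le]
    congr 1
    rcases D with _ | ⟨⟨c', B'⟩, D⟩
    · rw [joinBlocks, joinRotated, bpass]
    · have hcc' : c ≤ c' := (hD.1 c (by simp)).le
      rw [joinBlocks, bpass_cons_cons, min_eq_left hcc', max_eq_right hcc', ← joinBlocks,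
        bpass_joinBlocks hD]

theorem length_joinRotated : ∀ D : List (ℕ × List ℕ),
    (joinRotated D).length = ((tailLengths D).map (· + 1)).sum
  | [] => rfl
  | (c, B) :: D => by
    rw [joinRotated, tailLengths_cons, List.length_append, List.length_cons, length_joinRotated D,
      List.map_cons, List.sum_cons]
    ring

theorem joinRotated_cutBlocks : ∀ {L s : List ℕ}, (L.map (· + 1)).sum = s.length →
    joinRotated (cutBlocks L s) = s
  | [], s, h => (List.length_eq_zero_iff.1 h.symm).symm ▸ rfl
  | b :: L, s, h => by
    rw [List.map_cons, List.sum_cons] at h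
    rw [cutBlocks, joinRotated, joinRotated_cutBlocks (by rw [List.length_drop]; omega),
      List.getD_eq_getElem _ _ (by omega), ← List.drop_eq_getElem_cons, List.take_append_drop]

theorem tailLengths_cutBlocks : ∀ {L s : List ℕ}, (L.map (· + 1)).sum = s.length →
    tailLengths (cutBlocks L s) = L
  | [], _, _ => rfl
  | b :: L, s, h => by
    rw [List.map_cons, List.sum_cons] at h
    rw [cutBlocks, tailLengths_cons, tailLengths_cutBlocks (by rw [List.length_drop]; omega),
      List.length_take_of_le (by omega)]

theorem cutBlocks_joinRotated : ∀ D : List (ℕ × List ℕ),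
    cutBlocks (tailLengths D) (joinRotated D) = D
  | [] => rfl
  | (c, B) :: D => by
    have hdrop : (B ++ c :: joinRotated D).drop (B.length + 1) = joinRotated D := by
      rw [← List.singleton_append, ← List.append_assoc, List.drop_left' (by simp)]
    rw [tailLengths_cons, joinRotated, cutBlocks, List.getD_append_right _ _ _ _ le_rfl,
      Nat.sub_self, List.getD_cons_zero, List.take_left, hdrop, cutBlocks_joinRotated D]

theorem isLTRMax_append_joinBlocks_iff : ∀ {u : List ℕ} {D : List (ℕ × List ℕ)},
    IsRecordBlocks u D → ∀ j,
      (IsLTRMax (u ++ joinBlocks D) (u.length + j) ↔ j ∈ blockStarts (tailLengths D))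
  | u, [], _, j => by
    simp only [joinBlocks, List.append_nil, tailLengths, List.map_nil, blockStarts,
      List.not_mem_nil, iff_false]
    exact fun h => by have := h.1; omega
  | u, (c, B) :: D, ⟨hu, hB, hD⟩, j => by
    simp only [tailLengths_cons, blockStarts, List.mem_cons, List.mem_map]
    rcases j with _ | i
    · rw [joinBlocks, isLTRMax_append_iff]
      simpa [isLTRMax_zero] using hu
    rcases lt_or_ge i B.length with hi | hi
    · -- the entry `B[i]` comes after the larger head `c`
      have hpos : u.length + (i + 1) = (u ++ [c]).length + i := by
        rw [List.length_append, List.length_singleton]; omega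
      rw [joinBlocks, ← List.singleton_append, ← List.append_assoc, hpos, isLTRMax_append_iff,
        List.getD_append _ _ _ _ hi, List.getD_eq_getElem _ _ hi]
      have := hB _ (List.getElem_mem hi)
      simp only [List.mem_append, List.mem_singleton]
      constructor
      · rintro ⟨-, hc⟩
        exact absurd (hc c (Or.inr rfl)) (by omega)
      · rintro (h | ⟨a, -, ha⟩) <;> omega
    · obtain ⟨i, rfl⟩ := Nat.exists_eq_add_of_le hi
      have hpos : u.length + (B.length + i + 1) = (u ++ c :: B).length + i := by
        rw [List.length_append, List.length_cons]; omega
      rw [joinBlocks, ← List.cons_append, ← List.append_assoc, hpos,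
        isLTRMax_append_joinBlocks_iff hD]
      constructor
      · exact fun h => Or.inr ⟨i, h, by omega⟩
      · rintro (h | ⟨a, ha, hai⟩)
        · omega
        · exact (show a = i by omega) ▸ ha

theorem isRecordBlocks_iff : ∀ {u : List ℕ} {D : List (ℕ × List ℕ)},
    IsRecordBlocks u D ↔
      ∀ q ∈ blockEnds (tailLengths D), IsLTRMax (u ++ joinRotated D) (u.length + q)
  | u, [] => by simp [IsRecordBlocks, tailLengths, blockEnds]
  | u, (c, B) :: D => by
    have hend : IsLTRMax (u ++ joinRotated ((c, B) :: D)) (u.length + B.length) ↔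
        ∀ x ∈ u ++ B, x < c := by
      rw [joinRotated, ← List.append_assoc, ← List.length_append, ← add_zero (u ++ B).length,
        isLTRMax_append_iff]
      simp [isLTRMax_zero]
    have hrest : ∀ q, IsLTRMax (u ++ joinRotated ((c, B) :: D)) (u.length + (q + (B.length + 1)))
        ↔ IsLTRMax ((u ++ B ++ [c]) ++ joinRotated D) ((u ++ B ++ [c]).length + q) := by
      intro q
      rw [joinRotated, List.append_assoc, List.append_assoc, List.singleton_append]
      simp only [List.length_append, List.length_singleton]
      rw [show u.length + (q + (B.length + 1)) = u.length + B.length + 1 + q by omega]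
    have hcongr : IsRecordBlocks (u ++ c :: B) D ↔ IsRecordBlocks (u ++ B ++ [c]) D :=
      isRecordBlocks_congr fun x => by simp [or_comm, or_left_comm]
    rw [tailLengths_cons, blockEnds, List.forall_mem_cons, List.forall_mem_map, hend,
      IsRecordBlocks, hcongr, isRecordBlocks_iff]
    simp only [hrest, List.forall_mem_append]
    tauto

/-- The preimage of `s` under `bpass` that corresponds to the preimage `ρ` of `bpass ρ`: cut `s`
into pieces as long as the blocks of `ρ` and rotate each piece back. -/
def transferPreimage (s ρ : List ℕ) : List ℕ :=
  joinBlocks (cutBlocks (tailLengths (recordBlocks ρ)) s)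

section transferPreimage

variable {ρ s : List ℕ}

theorem joinRotated_recordBlocks (hρ : ρ.Nodup) : joinRotated (recordBlocks ρ) = bpass ρ := by
  rw [← bpass_joinBlocks (isRecordBlocks_recordBlocks (u := []) hρ (by simp)),
    joinBlocks_recordBlocks]

theorem sum_tailLengths_recordBlocks (hρ : ρ.Nodup) :
    ((tailLengths (recordBlocks ρ)).map (· + 1)).sum = ρ.length := by
  rw [← length_joinRotated, joinRotated_recordBlocks hρ, (bpass_perm ρ).length_eq]

theorem isRecordBlocks_cutBlocks (hρ : ρ.Nodup) (hlen : s.length = ρ.length)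
    (hs : ∀ k, IsLTRMax (bpass ρ) k ↔ IsLTRMax s k) :
    IsRecordBlocks [] (cutBlocks (tailLengths (recordBlocks ρ)) s) := by
  have hsum := (sum_tailLengths_recordBlocks hρ).trans hlen.symm
  have hρ' := isRecordBlocks_iff.1 (isRecordBlocks_recordBlocks (u := []) hρ (by simp))
  refine isRecordBlocks_iff.2 fun q hq => ?_
  rw [tailLengths_cutBlocks hsum] at hq
  simpa [joinRotated_cutBlocks hsum, ← hs, ← joinRotated_recordBlocks hρ] using hρ' q hq

theorem bpass_transferPreimage (hρ : ρ.Nodup) (hlen : s.length = ρ.length)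
    (hs : ∀ k, IsLTRMax (bpass ρ) k ↔ IsLTRMax s k) : bpass (transferPreimage s ρ) = s := by
  rw [transferPreimage, bpass_joinBlocks (isRecordBlocks_cutBlocks hρ hlen hs),
    joinRotated_cutBlocks ((sum_tailLengths_recordBlocks hρ).trans hlen.symm)]

theorem isLTRMax_transferPreimage_iff (hρ : ρ.Nodup) (hlen : s.length = ρ.length)
    (hs : ∀ k, IsLTRMax (bpass ρ) k ↔ IsLTRMax s k) (k : ℕ) :
    IsLTRMax ρ k ↔ IsLTRMax (transferPreimage s ρ) k := by
  have h₁ := isLTRMax_append_joinBlocks_iff (isRecordBlocks_recordBlocks (u := []) hρ (by simp)) k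
  have h₂ := isLTRMax_append_joinBlocks_iff (isRecordBlocks_cutBlocks hρ hlen hs) k
  rw [tailLengths_cutBlocks ((sum_tailLengths_recordBlocks hρ).trans hlen.symm)] at h₂
  simp only [List.nil_append, List.length_nil, zero_add, joinBlocks_recordBlocks] at h₁ h₂
  rw [transferPreimage, h₁, h₂]

theorem transferPreimage_bpass_transferPreimage (hρ : ρ.Nodup) (hlen : s.length = ρ.length)
    (hs : ∀ k, IsLTRMax (bpass ρ) k ↔ IsLTRMax s k) :
    transferPreimage (bpass ρ) (transferPreimage s ρ) = ρ := by
  rw [transferPreimage, transferPreimage,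
    recordBlocks_joinBlocks (isRecordBlocks_cutBlocks hρ hlen hs),
    tailLengths_cutBlocks ((sum_tailLengths_recordBlocks hρ).trans hlen.symm),
    ← joinRotated_recordBlocks hρ, cutBlocks_joinRotated, joinBlocks_recordBlocks]

end transferPreimage

theorem IsNodeAt.le {n j : ℕ} {π σ : List ℕ} (hσ : IsNodeAt n π σ j) : j ≤ n := by
  obtain ⟨hperm, hπ, hmin⟩ := hσ
  by_contra! hnj
  have hfix : bpass (bpass^[n] σ) = bpass^[n] σ :=
    bpass_eq_self_of_pairwise _ (pairwise_iterate_bpass n σ hperm.length_eq.le)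
  apply hmin n hnj
  rw [← hπ, ← Nat.sub_add_cancel hnj.le, Function.iterate_add_apply, Function.iterate_fixed hfix]

theorem IsNodeAt.bpass {n j : ℕ} {π σ : List ℕ} (hσ : IsNodeAt n π σ (j + 1)) :
    IsNodeAt n π (bpass σ) j :=
  ⟨(bpass_perm σ).trans hσ.1, hσ.2.1, fun i hi => hσ.2.2 (i + 1) (by omega)⟩

theorem IsNodeAt.ne_root {n j : ℕ} {π σ : List ℕ} (hσ : IsNodeAt n π σ (j + 1)) : σ ≠ π :=
  hσ.2.2 0 j.succ_pos

theorem IsNode.exists_isNodeAt {n : ℕ} {π σ : List ℕ} (hσ : IsNode n π σ) :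
    ∃ j, IsNodeAt n π σ j :=
  ⟨Nat.find hσ.2, hσ.1, Nat.find_spec hσ.2, fun _ => Nat.find_min hσ.2⟩

/-- The argument `f` is fuel: any bound on the height of `σ` gives the same value. -/
def treeMap (π τ : List ℕ) : ℕ → List ℕ → List ℕ
  | 0, _ => τ
  | f + 1, σ => if σ = π then τ else transferPreimage (treeMap π τ f (bpass σ)) σ

theorem treeMap_root (π τ : List ℕ) : ∀ f, treeMap π τ f π = τ
  | 0 => rfl
  | _ + 1 => if_pos rfl

section treeMap

variable {n : ℕ} {π τ : List ℕ}

theorem treeMap_succ_of_ne {σ : List ℕ} (f : ℕ) (hσ : σ ≠ π) :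
    treeMap π τ (f + 1) σ = transferPreimage (treeMap π τ f (bpass σ)) σ :=
  if_neg hσ

theorem treeMap_eq_of_iterate_eq : ∀ {j f : ℕ} {σ : List ℕ}, bpass^[j] σ = π → j ≤ f →
    treeMap π τ f σ = treeMap π τ j σ
  | 0, _, σ, hσ, _ => by rw [show σ = π from hσ, treeMap_root, treeMap_root]
  | j + 1, f + 1, σ, hσ, hjf => by
    by_cases hσπ : σ = π
    · rw [hσπ, treeMap_root, treeMap_root]
    · rw [treeMap_succ_of_ne f hσπ, treeMap_succ_of_ne j hσπ,
        treeMap_eq_of_iterate_eq (σ := bpass σ) hσ (by omega)]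

/-- A non-root node is never sent to the root: otherwise `τ` would be periodic under `bpass`, hence
sorted, and then `σ` and `π`, with all their left-to-right maxima where `τ` has them, would both be
the identity. -/
theorem transferPreimage_ne_root (hπ : IsPermList n π) (hτ : IsPermList n τ)
    (h : ∀ j, IsLTRMax π j ↔ IsLTRMax τ j) {j : ℕ} {σ s : List ℕ} (hσ : IsNodeAt n π σ (j + 1))
    (hσs : ∀ k, IsLTRMax σ k ↔ IsLTRMax (transferPreimage s σ) k)
    (hs : bpass (transferPreimage s σ) = s) (hsτ : bpass^[j] s = τ) :
    transferPreimage s σ ≠ τ := by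
  intro hτ'
  have hτ_lt : τ.Pairwise (· < ·) :=
    ((pairwise_of_iterate_bpass_eq_self (k := j) (by rw [Function.iterate_succ_apply,
      ← hτ', hs, hsτ, hτ'])).and hτ.nodup).imp fun h => lt_of_le_of_ne h.1 h.2
  have hlen : ∀ {l}, IsPermList n l → l.length = τ.length := fun hl =>
    hl.length_eq.trans hτ.length_eq.symm
  have hπ_lt := pairwise_lt_of_isLTRMax_iff (hlen hπ) h hτ_lt
  have hσ_lt := pairwise_lt_of_isLTRMax_iff (hlen hσ.1) (by rwa [← hτ']) hτ_lt
  exact hσ.ne_root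
    (List.Perm.eq_of_pairwise' (hσ_lt.imp le_of_lt) (hπ_lt.imp le_of_lt) (hσ.1.trans hπ.symm))

theorem isNodeAt_treeMap (hπ : IsPermList n π) (hτ : IsPermList n τ)
    (h : ∀ j, IsLTRMax π j ↔ IsLTRMax τ j) : ∀ {j : ℕ} {σ : List ℕ}, IsNodeAt n π σ j →
      IsNodeAt n τ (treeMap π τ j σ) j ∧ (∀ k, IsLTRMax σ k ↔ IsLTRMax (treeMap π τ j σ) k) ∧
        treeMap τ π j (treeMap π τ j σ) = σ
  | 0, σ, ⟨_, hσ, _⟩ => by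
    subst hσ
    exact ⟨⟨hτ, rfl, fun _ hi => absurd hi (Nat.not_lt_zero _)⟩, h, rfl⟩
  | j + 1, σ, hσ => by
    obtain ⟨⟨hs_perm, hsτ, hs_min⟩, hs_ltr, hs_inv⟩ := isNodeAt_treeMap hπ hτ h hσ.bpass
    set s := treeMap π τ j (bpass σ)
    have hlen : s.length = σ.length := hs_perm.length_eq.trans hσ.1.length_eq.symm
    have hb := bpass_transferPreimage hσ.1.nodup hlen hs_ltr
    have hσs := isLTRMax_transferPreimage_iff hσ.1.nodup hlen hs_ltr
    have hne := transferPreimage_ne_root hπ hτ h hσ hσs hb hsτ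
    rw [treeMap_succ_of_ne j hσ.ne_root]
    refine ⟨⟨(bpass_perm _).symm.trans (hb ▸ hs_perm), ?_, ?_⟩, hσs, ?_⟩
    · rw [Function.iterate_succ_apply, hb, hsτ]
    · rintro (_ | i) hi
      · exact hne
      · rw [Function.iterate_succ_apply, hb]
        exact hs_min i (by omega)
    · rw [treeMap_succ_of_ne j hne, hb, hs_inv,
        transferPreimage_bpass_transferPreimage hσ.1.nodup hlen hs_ltr]

theorem isNode_treeMap {σ : List ℕ} (hπ : IsPermList n π) (hτ : IsPermList n τ)
    (h : ∀ j, IsLTRMax π j ↔ IsLTRMax τ j) (hσ : IsNode n π σ) :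
    IsNode n τ (treeMap π τ n σ) := by
  obtain ⟨j, hj⟩ := hσ.exists_isNodeAt
  obtain ⟨⟨hperm, hiter, -⟩, -⟩ := isNodeAt_treeMap hπ hτ h hj
  rw [treeMap_eq_of_iterate_eq hj.2.1 hj.le]
  exact ⟨hperm, j, hiter⟩

theorem treeMap_treeMap {σ : List ℕ} (hπ : IsPermList n π) (hτ : IsPermList n τ)
    (h : ∀ j, IsLTRMax π j ↔ IsLTRMax τ j) (hσ : IsNode n π σ) :
    treeMap τ π n (treeMap π τ n σ) = σ := by
  obtain ⟨j, hj⟩ := hσ.exists_isNodeAt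
  obtain ⟨hj', -, hinv⟩ := isNodeAt_treeMap hπ hτ h hj
  rw [treeMap_eq_of_iterate_eq hj.2.1 hj.le, treeMap_eq_of_iterate_eq hj'.2.1 hj'.le, hinv]

theorem treeMap_bpass {σ : List ℕ} (hπ : IsPermList n π) (hτ : IsPermList n τ)
    (h : ∀ j, IsLTRMax π j ↔ IsLTRMax τ j) (hσ : IsNode n π σ) (hne : σ ≠ π) :
    treeMap π τ n (bpass σ) = bpass (treeMap π τ n σ) := by
  obtain ⟨_ | j, hj⟩ := hσ.exists_isNodeAt
  · exact absurd hj.2.1 hne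
  obtain ⟨⟨hs_perm, -, -⟩, hs_ltr, -⟩ := isNodeAt_treeMap hπ hτ h hj.bpass
  rw [treeMap_eq_of_iterate_eq hj.2.1 hj.le, treeMap_eq_of_iterate_eq hj.bpass.2.1 hj.bpass.le,
    treeMap_succ_of_ne j hne,
    bpass_transferPreimage hj.1.nodup (hs_perm.length_eq.trans hj.1.length_eq.symm) hs_ltr]

end treeMap

/-- Two permutations of the same size with left-to-right maxima in the same positions
have isomorphic trees of iterated bubblesort preimages. -/
theorem stmt_9 (n : ℕ) (π τ : List ℕ) (hπ : IsPermList n π) (hτ : IsPermList n τ)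
    (h : ∀ j, IsLTRMax π j ↔ IsLTRMax τ j) : TreeIso n π τ := by
  have h' : ∀ j, IsLTRMax τ j ↔ IsLTRMax π j := fun j => (h j).symm
  refine ⟨treeMap π τ n, fun σ hσ => isNode_treeMap hπ hτ h hσ, fun σ σ' hσ hσ' he => ?_,
    fun ρ hρ => ⟨treeMap τ π n ρ, isNode_treeMap hτ hπ h' hρ, treeMap_treeMap hτ hπ h' hρ⟩,
    treeMap_root π τ n, fun σ hσ hne => treeMap_bpass hπ hτ h hσ hne⟩
  rw [← treeMap_treeMap hπ hτ h hσ, he, treeMap_treeMap hπ hτ h hσ']
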